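/- For t = (17/20, 3/40, 3/40) and M = 20, the M-type distribution p = (16/20, 2/20, 2/20) achieves strictly smaller D(t‖p) than every M-type distribution q with q_1 ≥ ⌊M t_1⌋/M = 17/20. In particular, the optimal M-type approximation minimizing D(t‖·) satisfies p_1 < ⌊M t_1⌋/M. -/

import Mathlib

open Finset

/-- Informational divergence D(t‖p) with the convention D = ⊤ if some t i > 0 but p i = 0. -/
noncomputable def Dkl {n : ℕ} (t p : Fin n → ℝ) : EReal :=
  if ∀ i, 0 < t i → 0 < p i then
    ((∑ i, if 0 < t i then t i * Real.log (t i / p i) else 0 : ℝ) : EReal)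
  else ⊤

/-! Among the `20`-types with first count at least `17`, only `(17,1,2)`, `(17,2,1)` and
`(18,1,1)` have full support, so all others are at infinite divergence from `t`; each of the three
loses to `(16,2,2)`. Multiplied by `40`, which makes the weights `40 tᵢ` natural, the comparison
`D(t‖q) - D(t‖p) = ∑ tᵢ log (pᵢ/qᵢ) > 0` becomes the rational inequality `∏ (pᵢ/qᵢ)^(40 tᵢ) > 1`. -/

section Divergence

variable {n : ℕ} (t p q : Fin n → ℝ)

theorem Dkl_eq_sum_of_pos (ht : ∀ i, 0 < t i) (hp : ∀ i, 0 < p i) :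
    Dkl t p = ((∑ i, t i * Real.log (t i / p i) : ℝ) : EReal) := by
  rw [Dkl, if_pos fun i _ => hp i]
  simp only [ht, if_true]

theorem Dkl_eq_top_of_eq_zero {i : Fin n} (hti : 0 < t i) (hpi : p i = 0) : Dkl t p = ⊤ := by
  rw [Dkl, if_neg]
  push Not
  exact ⟨i, hti, hpi.le⟩

theorem Dkl_lt_Dkl_iff (ht : ∀ i, 0 < t i) (hp : ∀ i, 0 < p i) (hq : ∀ i, 0 < q i) :
    Dkl t p < Dkl t q ↔ 0 < ∑ i, t i * Real.log (p i / q i) := by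
  have hlog : ∀ i, t i * Real.log (t i / q i) =
      t i * Real.log (t i / p i) + t i * Real.log (p i / q i) := fun i => by
    rw [Real.log_div (ht i).ne' (hq i).ne', Real.log_div (ht i).ne' (hp i).ne',
      Real.log_div (hp i).ne' (hq i).ne']
    ring
  rw [Dkl_eq_sum_of_pos t p ht hp, Dkl_eq_sum_of_pos t q ht hq, EReal.coe_lt_coe_iff]
  simp only [hlog, sum_add_distrib, lt_add_iff_pos_right]

end Divergence

theorem sum_mul_log_pos_of_one_lt_prod_pow {ι : Type*} [Fintype ι] (t x : ι → ℝ) (w : ι → ℕ)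
    {N : ℝ} (hN : 0 < N) (htw : ∀ i, N * t i = w i) (hx : ∀ i, 0 < x i)
    (hprod : 1 < ∏ i, x i ^ w i) : 0 < ∑ i, t i * Real.log (x i) := by
  have hlog : N * ∑ i, t i * Real.log (x i) = Real.log (∏ i, x i ^ w i) := by
    rw [Real.log_prod fun i _ => (pow_pos (hx i) _).ne', mul_sum]
    refine sum_congr rfl fun i _ => ?_
    rw [Real.log_pow, ← htw i, mul_assoc]
  exact pos_of_mul_pos_right (hlog ▸ Real.log_pos hprod) hN.le

theorem eq_zero_or_eq_of_sum_eq_twenty {c : Fin 3 → ℕ} (hsum : ∑ i, c i = 20) (h0 : 17 ≤ c 0) :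
    c 1 = 0 ∨ c 2 = 0 ∨ c = ![17, 1, 2] ∨ c = ![17, 2, 1] ∨ c = ![18, 1, 1] := by
  have hc : c = ![c 0, c 1, c 2] := by ext i; fin_cases i <;> rfl
  rw [Fin.sum_univ_three] at hsum
  rw [hc]
  simp only [Matrix.cons_val_one, Matrix.cons_val, Matrix.vecCons_inj, and_true]
  omega

theorem Dkl_lt_Dkl_of_seventeen_le (c : Fin 3 → ℕ) (hsum : ∑ i, c i = 20) (h0 : 17 ≤ c 0) :
    Dkl ![17 / 20, 3 / 40, 3 / 40] ![16 / 20, 2 / 20, 2 / 20] <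
      Dkl ![17 / 20, 3 / 40, 3 / 40] (fun i => (c i : ℝ) / 20) := by
  have ht : ∀ i, 0 < ![(17 / 20 : ℝ), 3 / 40, 3 / 40] i := by intro i; fin_cases i <;> norm_num
  have hp : ∀ i, 0 < ![(16 / 20 : ℝ), 2 / 20, 2 / 20] i := by intro i; fin_cases i <;> norm_num
  have htw : ∀ i, 40 * ![(17 / 20 : ℝ), 3 / 40, 3 / 40] i = ((![34, 3, 3] : Fin 3 → ℕ) i : ℝ) := by
    intro i; fin_cases i <;> norm_num
  have hfinite := Dkl_eq_sum_of_pos _ _ ht hp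
  rcases eq_zero_or_eq_of_sum_eq_twenty hsum h0 with hz | hz | rfl | rfl | rfl
  · rw [hfinite, Dkl_eq_top_of_eq_zero (i := 1) _ _ (ht 1) (by simp [hz])]
    exact EReal.coe_lt_top _
  · rw [hfinite, Dkl_eq_top_of_eq_zero (i := 2) _ _ (ht 2) (by simp [hz])]
    exact EReal.coe_lt_top _
  all_goals
    rw [Dkl_lt_Dkl_iff _ _ _ ht hp (by intro i; fin_cases i <;> norm_num)]
    refine sum_mul_log_pos_of_one_lt_prod_pow _ _ _ (N := 40) (by norm_num) htw
      (by intro i; fin_cases i <;> norm_num) ?_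
    norm_num [Fin.prod_univ_succ]

theorem rounding_off_fails
    (t : Fin 3 → ℝ) (ht : t = ![17 / 20, 3 / 40, 3 / 40])
    (p : Fin 3 → ℝ) (hp : p = ![16 / 20, 2 / 20, 2 / 20]) :
    (∀ c : Fin 3 → ℕ, ∑ i, c i = 20 → (17 / 20 : ℝ) ≤ (c 0 : ℝ) / 20 →
        Dkl t p < Dkl t (fun i => (c i : ℝ) / 20)) ∧
      ∀ c : Fin 3 → ℕ, ∑ i, c i = 20 →
        (∀ c' : Fin 3 → ℕ, ∑ i, c' i = 20 →
          Dkl t (fun i => (c i : ℝ) / 20) ≤ Dkl t (fun i => (c' i : ℝ) / 20)) →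
        (c 0 : ℝ) / 20 < 17 / 20 := by
  subst ht hp
  have rounded_worse : ∀ c : Fin 3 → ℕ, ∑ i, c i = 20 → (17 / 20 : ℝ) ≤ (c 0 : ℝ) / 20 →
      Dkl ![17 / 20, 3 / 40, 3 / 40] ![16 / 20, 2 / 20, 2 / 20] <
        Dkl ![17 / 20, 3 / 40, 3 / 40] (fun i => (c i : ℝ) / 20) := fun c hsum hc0 =>
    Dkl_lt_Dkl_of_seventeen_le c hsum (by exact_mod_cast (by linarith : (17 : ℝ) ≤ c 0))
  refine ⟨rounded_worse, fun c hsum hmin => ?_⟩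
  by_contra! hc0
  have hp_mtype : (fun i => ((![16, 2, 2] : Fin 3 → ℕ) i : ℝ) / 20) = ![16 / 20, 2 / 20, 2 / 20] := by
    funext i; fin_cases i <;> norm_num
  have hmin_p := hmin ![16, 2, 2] (by decide)
  rw [hp_mtype] at hmin_p
  exact (rounded_worse c hsum hc0).not_ge hmin_p
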